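/- Let (C, τ^C) be a compact Hausdorff space, Θ any nonempty set, and suppose U : Θ × C → ℝ is continuous in the second variable for each fixed θ, V : Θ × C → ℝ is upper semicontinuous in the second variable for each fixed θ, and there exists c* ∈ C with U(θ, c*) ≥ u̲(θ) for all θ ∈ Θ, where u̲ : Θ → ℝ. Then there exists D* ∈ T attaining the supremum sup_{D ∈ T} inf_{θ ∈ Θ} V*(θ, D), where T := {D ∈ CL(C) : sup_{d ∈ D} U(θ, d) ≥ u̲(θ) for all θ ∈ Θ} and V*(θ, D) := sup_{d ∈ Φ(θ, D)} V(θ, d) with Φ(θ, D) := argmax_{d ∈ D} U(θ, d). -/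

import Mathlib

/-- The hyperspace of nonempty closed subsets of a topological space. -/
def CL (C : Type*) [TopologicalSpace C] : Type _ :=
  {A : Set C // A.Nonempty ∧ IsClosed A}

/-- The subbase for the Fell topology: all sets
`V⁻ = {A : A ∩ V ≠ ∅}` and `W⁺ = {A : A ⊆ W}` for `V`, `W` nonempty open. -/
def fellSubbasis (C : Type*) [TopologicalSpace C] : Set (Set (CL C)) :=
  {s | (∃ V : Set C, IsOpen V ∧ V.Nonempty ∧ s = {A : CL C | (A.1 ∩ V).Nonempty}) ∨
       (∃ W : Set C, IsOpen W ∧ W.Nonempty ∧ s = {A : CL C | A.1 ⊆ W})}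

/-- The Fell topology on the hyperspace of nonempty closed subsets. -/
instance fellTopology (C : Type*) [TopologicalSpace C] : TopologicalSpace (CL C) :=
  TopologicalSpace.generateFrom (fellSubbasis C)

/-- The agent's indirect utility over menus: `U*(θ, D) = sup_{d ∈ D} U(θ, d)`. -/
noncomputable def Ustar {Θ C : Type*} [TopologicalSpace C]
    (U : Θ × C → ℝ) (θ : Θ) (D : CL C) : ℝ :=
  sSup ((fun d => U (θ, d)) '' D.1)


/-- The agent's argmax correspondence:
`Φ(θ, D) = {d ∈ D : U(θ, d) = sup_{d' ∈ D} U(θ, d')}`. -/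
noncomputable def Phi {Θ C : Type*} [TopologicalSpace C]
    (U : Θ × C → ℝ) (θ : Θ) (D : CL C) : Set C :=
  {d ∈ D.1 | U (θ, d) = Ustar U θ D}

/-- The principal's indirect utility over menus:
`V*(θ, D) = sup_{d ∈ Φ(θ, D)} V(θ, d)`. -/
noncomputable def Vstar {Θ C : Type*} [TopologicalSpace C]
    (U V : Θ × C → ℝ) (θ : Θ) (D : CL C) : ℝ :=
  sSup ((fun d => V (θ, d)) '' Phi U θ D)

/-- The set of individually rational menus:
`T = {D ∈ CL(C) : sup_{d ∈ D} U(θ, d) ≥ u̲(θ) for all θ}`. -/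
noncomputable def menusIR {Θ C : Type*} [TopologicalSpace C]
    (U : Θ × C → ℝ) (ulow : Θ → ℝ) : Set (CL C) :=
  {D : CL C | ∀ θ : Θ, ulow θ ≤ Ustar U θ D}


/-!
Closed menus are compact, so `U*(θ, ·)` is attained; this makes it upper semicontinuous in the
Fell topology and the argmax `Φ(θ, D)` nonempty and compact, so `V*(θ, ·)` is attained too.
`V*(θ, ·)` is upper semicontinuous by a margin argument: if `Φ(θ, D)` lies in the open set
`S = {V(θ, ·) < c}`, the agent's utility on the compact set `D \ S` stays below some
`r < U*(θ, D)`, and every menu that meets `{U(θ, ·) > r}` and lies in `S ∪ {U(θ, ·) < r}` again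
has its argmax in `S`. The worst-case objective, an infimum of upper semicontinuous functions,
therefore attains its maximum on the individually rational menus: they form a closed subset
(nonempty, as it contains `C`) of the hyperspace, which is compact by Alexander's subbasis
theorem.
-/

open Set TopologicalSpace

theorem IsCompact.exists_lt_forall_lt {X α : Type*} [TopologicalSpace X] [LinearOrder α]
    [TopologicalSpace α] [ClosedIciTopology α] [DenselyOrdered α] [NoMinOrder α]
    {s : Set X} (hs : IsCompact s) {f : X → α} (hf : ContinuousOn f s) {m : α}
    (h : ∀ x ∈ s, f x < m) : ∃ r < m, ∀ x ∈ s, f x < r := by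
  rcases s.eq_empty_or_nonempty with rfl | hne
  · obtain ⟨r, hr⟩ := exists_lt m
    exact ⟨r, hr, by simp⟩
  · obtain ⟨x₀, hx₀, hmax⟩ := hs.exists_isMaxOn hne hf
    obtain ⟨r, hx₀r, hrm⟩ := exists_between (h x₀ hx₀)
    exact ⟨r, hrm, fun x hx => (hmax hx).trans_lt hx₀r⟩

namespace CL

variable {C : Type*} [TopologicalSpace C]

theorem isOpen_setOf_subset {W : Set C} (hW : IsOpen W) : IsOpen {A : CL C | A.1 ⊆ W} := by
  rcases W.eq_empty_or_nonempty with rfl | hne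
  · convert isOpen_empty
    exact eq_empty_of_forall_notMem fun A hA => A.2.1.ne_empty (subset_empty_iff.1 hA)
  · exact isOpen_generateFrom_of_mem (Or.inr ⟨W, hW, hne, rfl⟩)

theorem isOpen_setOf_inter_nonempty {V : Set C} (hV : IsOpen V) :
    IsOpen {A : CL C | (A.1 ∩ V).Nonempty} := by
  rcases V.eq_empty_or_nonempty with rfl | hne
  · simp
  · exact isOpen_generateFrom_of_mem (Or.inl ⟨V, hV, hne, rfl⟩)

theorem exists_finite_forall_inter_nonempty {K : Set C} (hK : IsCompact K) {u : Set (Set C)}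
    (hu : ∀ V ∈ u, IsOpen V) (hKu : K ⊆ ⋃₀ u) :
    ∃ T ⊆ u, T.Finite ∧ ∀ A : CL C, (A.1 ∩ K).Nonempty → ∃ V ∈ T, (A.1 ∩ V).Nonempty := by
  rw [sUnion_eq_biUnion] at hKu
  obtain ⟨T, hTu, hT, hKT⟩ := hK.elim_finite_subcover_image hu hKu
  refine ⟨T, hTu, hT, ?_⟩
  rintro A ⟨x, hxA, hxK⟩
  obtain ⟨V, hVT, hxV⟩ := mem_iUnion₂.1 (hKT hxK)
  exact ⟨V, hVT, x, hxA, hxV⟩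

instance compactSpace [CompactSpace C] : CompactSpace (CL C) := by
  refine compactSpace_generateFrom rfl fun P hP hcover => ?_
  let hits : Set C → Set (CL C) := fun V => {A | (A.1 ∩ V).Nonempty}
  let u := {V : Set C | IsOpen V ∧ hits V ∈ P}
  have hu : ∀ V ∈ u, IsOpen V := fun V hV => hV.1
  have huP : hits '' u ⊆ P := image_subset_iff.2 fun V hV => hV.2
  rcases (⋃₀ u)ᶜ.eq_empty_or_nonempty with hempty | hne
  · obtain ⟨T, hTu, hT, hhit⟩ :=
      exists_finite_forall_inter_nonempty isCompact_univ hu (compl_empty_iff.1 hempty).ge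
    refine ⟨hits '' T, (image_mono hTu).trans huP, hT.image _, eq_univ_of_forall fun A => ?_⟩
    obtain ⟨V, hVT, hAV⟩ := hhit A (by simpa using A.2.1)
    exact ⟨hits V, mem_image_of_mem _ hVT, hAV⟩
  -- The closed set missed by all hit sets of the cover must lie in a subset set `W⁺` of it.
  have hmem : (⟨(⋃₀ u)ᶜ, hne, (isOpen_sUnion hu).isClosed_compl⟩ : CL C) ∈ ⋃₀ P :=
    hcover ▸ mem_univ _
  obtain ⟨s, hsP, hFs⟩ := mem_sUnion.1 hmem
  rcases hP hsP with ⟨V, hV, -, rfl⟩ | ⟨W, hW, -, rfl⟩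
  · obtain ⟨x, hxu, hxV⟩ := hFs
    exact (hxu (mem_sUnion_of_mem hxV (show V ∈ u from ⟨hV, hsP⟩))).elim
  obtain ⟨T, hTu, hT, hhit⟩ := exists_finite_forall_inter_nonempty
    hW.isClosed_compl.isCompact hu (compl_subset_comm.1 hFs)
  refine ⟨insert {A | A.1 ⊆ W} (hits '' T), insert_subset hsP ((image_mono hTu).trans huP),
    (hT.image _).insert _, eq_univ_of_forall fun A => ?_⟩
  by_cases hAW : A.1 ⊆ W
  · exact ⟨_, mem_insert _ _, hAW⟩
  · obtain ⟨V, hVT, hAV⟩ := hhit A (inter_compl_nonempty_iff.2 hAW)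
    exact ⟨hits V, mem_insert_of_mem _ (mem_image_of_mem _ hVT), hAV⟩

end CL

section Payoffs

variable {Θ C : Type*} [TopologicalSpace C] {U V : Θ × C → ℝ} {θ : Θ}

theorem Phi_isClosed (hU : Continuous fun c => U (θ, c)) (D : CL C) : IsClosed (Phi U θ D) :=
  D.2.2.inter (isClosed_eq hU continuous_const)

variable [CompactSpace C]

theorem isGreatest_Ustar (hU : Continuous fun c => U (θ, c)) (D : CL C) :
    IsGreatest ((fun d => U (θ, d)) '' D.1) (Ustar U θ D) :=
  (D.2.2.isCompact.image hU).isGreatest_sSup (D.2.1.image _)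

theorem le_Ustar (hU : Continuous fun c => U (θ, c)) {D : CL C} {d : C} (hd : d ∈ D.1) :
    U (θ, d) ≤ Ustar U θ D :=
  (isGreatest_Ustar hU D).2 (mem_image_of_mem _ hd)

theorem Ustar_lt_iff (hU : Continuous fun c => U (θ, c)) {D : CL C} {c : ℝ} :
    Ustar U θ D < c ↔ ∀ d ∈ D.1, U (θ, d) < c := by
  rw [(isGreatest_Ustar hU D).lt_iff, forall_mem_image]

theorem Phi_nonempty (hU : Continuous fun c => U (θ, c)) (D : CL C) : (Phi U θ D).Nonempty := by
  obtain ⟨d, hd, hdU⟩ := (isGreatest_Ustar hU D).1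
  exact ⟨d, hd, hdU⟩

theorem Vstar_lt_iff (hU : Continuous fun c => U (θ, c))
    (hV : UpperSemicontinuous fun c => V (θ, c)) {D : CL C} {c : ℝ} :
    Vstar U V θ D < c ↔ ∀ d ∈ Phi U θ D, V (θ, d) < c := by
  obtain ⟨d₀, hd₀, hmax⟩ := (hV.upperSemicontinuousOn _).exists_isMaxOn (Phi_nonempty hU D)
    (Phi_isClosed hU D).isCompact
  have hgreatest : IsGreatest ((fun d => V (θ, d)) '' Phi U θ D) (V (θ, d₀)) :=
    ⟨mem_image_of_mem _ hd₀, forall_mem_image.2 fun d hd => hmax hd⟩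
  rw [Vstar, hgreatest.csSup_eq, hgreatest.lt_iff, forall_mem_image]

theorem upperSemicontinuous_Ustar (hU : Continuous fun c => U (θ, c)) :
    UpperSemicontinuous (Ustar U θ : CL C → ℝ) := by
  refine upperSemicontinuous_iff_isOpen_preimage.2 fun c => ?_
  have hpre : Ustar U θ ⁻¹' Iio c = {A : CL C | A.1 ⊆ (fun d => U (θ, d)) ⁻¹' Iio c} := by
    ext A
    exact Ustar_lt_iff hU
  exact hpre ▸ CL.isOpen_setOf_subset (isOpen_Iio.preimage hU)

theorem upperSemicontinuous_Vstar (hU : Continuous fun c => U (θ, c))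
    (hV : UpperSemicontinuous fun c => V (θ, c)) :
    UpperSemicontinuous (Vstar U V θ : CL C → ℝ) := by
  refine upperSemicontinuous_iff_isOpen_preimage.2 fun c =>
    isOpen_iff_forall_mem_open.2 fun D₀ hD₀ => ?_
  set S := {d | V (θ, d) < c}
  have hS : IsOpen S := upperSemicontinuous_iff_isOpen_preimage.1 hV c
  obtain ⟨r, hr, hrS⟩ : ∃ r < Ustar U θ D₀, ∀ d ∈ D₀.1 \ S, U (θ, d) < r :=
    (D₀.2.2.sdiff hS).isCompact.exists_lt_forall_lt hU.continuousOn fun d ⟨hd, hdS⟩ =>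
      (le_Ustar hU hd).lt_of_ne fun h => hdS ((Vstar_lt_iff hU hV).1 hD₀ d ⟨hd, h⟩)
  refine ⟨{A | (A.1 ∩ {d | r < U (θ, d)}).Nonempty} ∩ {A | A.1 ⊆ S ∪ {d | U (θ, d) < r}},
    ?_, ?_, ?_⟩
  · rintro A ⟨⟨a, haA, ha⟩, hAS⟩
    have hrA : r < Ustar U θ A := ha.trans_le (le_Ustar hU haA)
    refine (Vstar_lt_iff hU hV).2 fun d ⟨hd, hdU⟩ => (hAS hd).resolve_right ?_
    exact (hdU ▸ hrA).not_gt
  · exact (CL.isOpen_setOf_inter_nonempty (isOpen_lt continuous_const hU)).inter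
      (CL.isOpen_setOf_subset (hS.union (isOpen_lt hU continuous_const)))
  · obtain ⟨d₀, hd₀, hd₀U⟩ := Phi_nonempty hU D₀
    refine ⟨⟨d₀, hd₀, hr.trans_eq hd₀U.symm⟩, fun d hd => ?_⟩
    by_cases hdS : d ∈ S
    · exact Or.inl hdS
    · exact Or.inr (hrS d ⟨hd, hdS⟩)

theorem isClosed_menusIR (hU : ∀ θ : Θ, Continuous fun c => U (θ, c)) (ulow : Θ → ℝ) :
    IsClosed (menusIR U ulow) := by
  rw [menusIR, ofPred_forall]
  exact isClosed_iInter fun θ => (upperSemicontinuous_Ustar (hU θ)).isClosed_preimage (ulow θ)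

end Payoffs

theorem exists_optimal_menu_worst_case_general {Θ C : Type*}
    [TopologicalSpace C] [CompactSpace C]
    (U V : Θ × C → ℝ)
    (hU : ∀ θ : Θ, Continuous fun c => U (θ, c))
    (hV : ∀ θ : Θ, UpperSemicontinuous fun c => V (θ, c))
    (ulow : Θ → ℝ) (hIR : ∃ cstar : C, ∀ θ : Θ, ulow θ ≤ U (θ, cstar)) :
    ∃ Dstar ∈ menusIR U ulow, ∀ D ∈ menusIR U ulow,
      (⨅ θ : Θ, ((Vstar U V θ D : ℝ) : EReal)) ≤
        ⨅ θ : Θ, ((Vstar U V θ Dstar : ℝ) : EReal) := by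
  obtain ⟨cstar, hcstar⟩ := hIR
  let fullMenu : CL C := ⟨univ, ⟨cstar, mem_univ _⟩, isClosed_univ⟩
  have hIRne : (menusIR U ulow).Nonempty :=
    ⟨fullMenu, fun θ => (hcstar θ).trans (le_Ustar (hU θ) (mem_univ cstar))⟩
  have hobjective : UpperSemicontinuous fun D : CL C => ⨅ θ : Θ, ((Vstar U V θ D : ℝ) : EReal) :=
    upperSemicontinuous_iInf fun θ => continuous_coe_real_ereal.comp_upperSemicontinuous
      (upperSemicontinuous_Vstar (hU θ) (hV θ)) EReal.coe_strictMono.monotone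
  obtain ⟨Dstar, hDstar, hmax⟩ := (hobjective.upperSemicontinuousOn _).exists_isMaxOn hIRne
    (isClosed_menusIR hU ulow).isCompact
  exact ⟨Dstar, hDstar, fun D hD => hmax hD⟩

/-- Existence of an optimal menu for a worst-case principal (Proposition 6 of the
paper): if `C` is compact Hausdorff, `Θ` is a nonempty set, `U(θ, ·)` is continuous and
`V(θ, ·)` is upper semicontinuous for each fixed `θ`, and some contract is individually
rational, then the problem `sup_{D ∈ T} inf_{θ ∈ Θ} V*(θ, D)` (the infimum taken in the
extended reals) admits a maximizer `D* ∈ T`. -/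
theorem exists_optimal_menu_worst_case {Θ C : Type*} [Nonempty Θ]
    [TopologicalSpace C] [CompactSpace C] [T2Space C]
    (U V : Θ × C → ℝ)
    (hU : ∀ θ : Θ, Continuous fun c => U (θ, c))
    (hV : ∀ θ : Θ, UpperSemicontinuous fun c => V (θ, c))
    (ulow : Θ → ℝ) (hIR : ∃ cstar : C, ∀ θ : Θ, ulow θ ≤ U (θ, cstar)) :
    ∃ Dstar ∈ menusIR U ulow, ∀ D ∈ menusIR U ulow,
      (⨅ θ : Θ, ((Vstar U V θ D : ℝ) : EReal)) ≤
        ⨅ θ : Θ, ((Vstar U V θ Dstar : ℝ) : EReal) :=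
  exists_optimal_menu_worst_case_general U V hU hV ulow hIR
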